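/- Let G be a finite group, let r be an m-tuple of positive integers, and let R ⊆ gen_m(G) contain exactly one representative of each orbit-equivalence class contained in gen_m(G). Then the number of generating m-tuples of type r satisfies |gen_r(G)| = Σ_{a ∈ R} Σ_s ∏_{i=0}^{m−1} λ_{s_i}(A_i^a, A_{i+1}^a), where for each a the inner sum runs over all distinct m-tuples s of positive integers whose multiset of entries equals that of r, and {A_i^a} are the nested subgroups associated to a. Consequently P_r(G) = |G|^{−m} |gen_r(G)| is given by this double sum divided by |G|^m. -/

import Mathlib

/-- The nested subgroups associated to an `m`-tuple `a`:
`A 0 = ⊥` and `A (i+1) = ⟨A i, a i⟩`. -/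
def nestedSubgroup {G : Type*} [Group G] {m : ℕ} (a : Fin m → G) : ℕ → Subgroup G
  | 0 => ⊥
  | i + 1 =>
      if h : i < m then nestedSubgroup a i ⊔ Subgroup.closure {a ⟨i, h⟩}
      else nestedSubgroup a i

/-- `A` lies in the orbit of `B` under the natural action of `Aut G` on subgroups. -/
def inAutOrbit {G : Type*} [Group G] (A B : Subgroup G) : Prop :=
  ∃ φ : MulAut G, Subgroup.map φ.toMonoidHom B = A

/-- `λ_i(A, B)`: the number of `x ∈ G` of order `i` with `⟨A, x⟩` in the
`Aut G`-orbit of `B`. -/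
noncomputable def lambdaConstOrd {G : Type*} [Group G] (i : ℕ) (A B : Subgroup G) : ℕ :=
  Nat.card {x : G // orderOf x = i ∧ inAutOrbit (A ⊔ Subgroup.closure {x}) B}

/-- Two `m`-tuples are orbit-equivalent if their nested subgroups are in the same
`Aut G`-orbits. -/
def orbitEquiv {G : Type*} [Group G] {m : ℕ} (a b : Fin m → G) : Prop :=
  ∀ i ≤ m, inAutOrbit (nestedSubgroup a i) (nestedSubgroup b i)

/-- The multiset of orders of the entries of an `m`-tuple. -/
noncomputable def tupleType {G : Type*} [Group G] {m : ℕ} (b : Fin m → G) : Multiset ℕ :=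
  Multiset.map (fun i => orderOf (b i)) Finset.univ.val

/-!
Sort the generating tuples `b` of type `r` by their representative `a ∈ R` and by their tuple
of orders `s`, a rearrangement of `r`. For fixed `a` and `s`, the tuples `b` with
`B_i ∈ Orb(A_i)` for all `i` and `orderOf (b i) = s i` are counted entry by entry: once
`b_0, …, b_{k-1}` are fixed with `B_k ∈ Orb(A_k)`, the admissible `b_k` are the `x` of order `s_k`
with `⟨B_k, x⟩ ∈ Orb(A_{k+1})`, and there are `λ_{s_k}(B_k, A_{k+1}) = λ_{s_k}(A_k, A_{k+1})` of
them because `λ` is `Aut(G)`-invariant in its first argument.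
-/

open Pointwise

lemma Nat.card_subtype_prod_of_card_fiber {α β : Type*} [Finite α] [Finite β]
    {p : α → Prop} {q : α → β → Prop} {n : ℕ} (h : ∀ a, p a → Nat.card {b // q a b} = n) :
    Nat.card {x : α × β // p x.1 ∧ q x.1 x.2} = Nat.card {a // p a} * n := by
  classical
  have := Fintype.ofFinite α
  calc Nat.card {x : α × β // p x.1 ∧ q x.1 x.2}
      = Nat.card (Σ a : {a // p a}, {b // q a b}) :=
        Nat.card_congr
          { toFun x := ⟨⟨x.1.1, x.2.1⟩, ⟨x.1.2, x.2.2⟩⟩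
            invFun y := ⟨(y.1.1, y.2.1), y.1.2, y.2.2⟩
            left_inv _ := rfl
            right_inv _ := rfl }
    _ = ∑ a : {a // p a}, n := by
        rw [Nat.card_sigma]
        exact Finset.sum_congr rfl fun a _ => h a a.2
    _ = Nat.card {a // p a} * n := by
        rw [Finset.sum_const, smul_eq_mul, Finset.card_univ, Nat.card_eq_fintype_card]

lemma Multiset.map_univ_val_eq_iff_exists_perm {α β : Type*} [Fintype α] {f g : α → β} :
    Multiset.map f Finset.univ.val = Multiset.map g Finset.univ.val ↔
      ∃ σ : Equiv.Perm α, g ∘ σ = f := by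
  classical
  constructor
  · intro h
    have hfiber (v : β) : Fintype.card {a // f a = v} = Fintype.card {a // g a = v} := by
      have := congrArg (Multiset.count v) h
      simp only [Multiset.count_map, eq_comm (a := v)] at this
      simpa only [Fintype.card_subtype, Finset.card_def, Finset.filter_val] using this
    exact ⟨Equiv.ofFiberEquiv fun v => Fintype.equivOfCardEq (hfiber v),
      funext (Equiv.ofFiberEquiv_map _)⟩
  · rintro ⟨σ, rfl⟩
    rw [← Multiset.map_map, Multiset.map_univ_val_equiv]

section Orbit

variable {G : Type*} [Group G]

lemma inAutOrbit_iff_mem_orbit {A B : Subgroup G} :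
    inAutOrbit A B ↔ A ∈ MulAction.orbit (MulAut G) B :=
  Iff.rfl

lemma inAutOrbit_refl (A : Subgroup G) : inAutOrbit A A :=
  MulAction.mem_orbit_self A

lemma inAutOrbit_comm {A B : Subgroup G} : inAutOrbit A B ↔ inAutOrbit B A :=
  MulAction.mem_orbit_symm

lemma inAutOrbit_smul_left_iff (φ : MulAut G) {A B : Subgroup G} :
    inAutOrbit (φ • A) B ↔ inAutOrbit A B := by
  simp only [inAutOrbit_iff_mem_orbit, ← MulAction.orbit_eq_iff, MulAction.orbit_smul]

lemma eq_top_of_inAutOrbit_top {A : Subgroup G} (h : inAutOrbit A ⊤) : A = ⊤ := by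
  obtain ⟨φ, rfl⟩ := h
  exact Subgroup.map_top_of_surjective _ φ.surjective

lemma lambdaConstOrd_smul (i : ℕ) (φ : MulAut G) (A B : Subgroup G) :
    lambdaConstOrd i (φ • A) B = lambdaConstOrd i A B := by
  refine (Nat.card_congr (Equiv.subtypeEquiv φ.toEquiv fun x => ?_)).symm
  have hsup : φ • A ⊔ Subgroup.closure {φ x} = φ • (A ⊔ Subgroup.closure {x}) := by
    rw [Subgroup.smul_sup, Subgroup.smul_closure, Set.smul_set_singleton, MulAut.smul_def]
  change _ ↔ orderOf (φ x) = i ∧ inAutOrbit (φ • A ⊔ Subgroup.closure {φ x}) B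
  rw [MulEquiv.orderOf_eq, hsup, inAutOrbit_smul_left_iff]

lemma lambdaConstOrd_congr_of_inAutOrbit (i : ℕ) {A A' : Subgroup G} (B : Subgroup G)
    (h : inAutOrbit A' A) : lambdaConstOrd i A' B = lambdaConstOrd i A B := by
  obtain ⟨φ, rfl⟩ := h
  exact lambdaConstOrd_smul i φ A B

lemma orbitEquiv_comm {m : ℕ} {a b : Fin m → G} :
    orbitEquiv a b ↔ orbitEquiv b a :=
  forall₂_congr fun _ _ => inAutOrbit_comm

end Orbit

section Snoc

variable {G : Type*} [Group G] {m : ℕ}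

lemma nestedSubgroup_snoc_of_le (c : Fin m → G) (x : G) {i : ℕ} (hi : i ≤ m) :
    nestedSubgroup (Fin.snoc c x : Fin (m + 1) → G) i = nestedSubgroup c i := by
  induction i with
  | zero => rfl
  | succ k ih =>
    have hk : k < m := hi
    rw [nestedSubgroup, nestedSubgroup, dif_pos hk, dif_pos (hk.trans m.lt_succ_self),
      ih hk.le]
    congr
    exact Fin.snoc_castSucc (α := fun _ => G) x c ⟨k, hk⟩

lemma nestedSubgroup_snoc_last (c : Fin m → G) (x : G) :
    nestedSubgroup (Fin.snoc c x : Fin (m + 1) → G) (m + 1)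
      = nestedSubgroup c m ⊔ Subgroup.closure {x} := by
  rw [nestedSubgroup, dif_pos m.lt_succ_self, nestedSubgroup_snoc_of_le c x le_rfl]
  congr
  exact Fin.snoc_last (α := fun _ => G) x c

lemma orbitEquiv_snoc_iff (c a : Fin m → G) (x y : G) :
    orbitEquiv (Fin.snoc c x : Fin (m + 1) → G) (Fin.snoc a y) ↔
      orbitEquiv c a ∧
        inAutOrbit (nestedSubgroup c m ⊔ Subgroup.closure {x})
          (nestedSubgroup a m ⊔ Subgroup.closure {y}) := by
  simp only [orbitEquiv, Nat.le_succ_iff, or_imp, forall_and, forall_eq,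
    nestedSubgroup_snoc_last]
  refine and_congr_left' (forall₂_congr fun i hi => ?_)
  rw [nestedSubgroup_snoc_of_le c x hi, nestedSubgroup_snoc_of_le a y hi]

lemma forall_orderOf_snoc_iff (c : Fin m → G) (x : G) (s : Fin m → ℕ) (n : ℕ) :
    (∀ i, orderOf ((Fin.snoc c x : Fin (m + 1) → G) i) = (Fin.snoc s n : Fin (m + 1) → ℕ) i) ↔
      (∀ i, orderOf (c i) = s i) ∧ orderOf x = n := by
  simp [Fin.forall_fin_succ']

end Snoc

section Count

variable {G : Type*} [Group G] [Finite G]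

theorem card_orders_orbitEquiv_eq_prod {m : ℕ} (a : Fin m → G) (s : Fin m → ℕ) :
    Nat.card {b : Fin m → G // (∀ i, orderOf (b i) = s i) ∧ orbitEquiv b a} =
      ∏ i : Fin m, lambdaConstOrd (s i) (nestedSubgroup a i) (nestedSubgroup a (i + 1)) := by
  induction m with
  | zero =>
    have hall (b : Fin 0 → G) : (∀ i, orderOf (b i) = s i) ∧ orbitEquiv b a :=
      ⟨finZeroElim, fun i hi => by rw [Nat.le_zero.1 hi]; exact inAutOrbit_refl ⊥⟩
    rw [Nat.card_congr (Equiv.subtypeUnivEquiv hall)]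
    simp
  | succ m ih =>
    obtain ⟨a, y, rfl⟩ : ∃ a' y, a = Fin.snoc a' y :=
      ⟨Fin.init a, a (Fin.last m), (Fin.snoc_init_self a).symm⟩
    obtain ⟨s, n, rfl⟩ : ∃ s' n, s = Fin.snoc s' n :=
      ⟨Fin.init s, s (Fin.last m), (Fin.snoc_init_self s).symm⟩
    have hprod : ∏ i : Fin m, lambdaConstOrd (s i)
          (nestedSubgroup (Fin.snoc a y : Fin (m + 1) → G) i)
          (nestedSubgroup (Fin.snoc a y : Fin (m + 1) → G) (i + 1)) =
        ∏ i : Fin m, lambdaConstOrd (s i) (nestedSubgroup a i) (nestedSubgroup a (i + 1)) :=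
      Finset.prod_congr rfl fun i _ => by
        rw [nestedSubgroup_snoc_of_le a y i.isLt.le, nestedSubgroup_snoc_of_le a y i.isLt]
    rw [Fin.prod_univ_castSucc]
    simp only [Fin.snoc_castSucc, Fin.snoc_last, Fin.val_castSucc, Fin.val_last, hprod,
      nestedSubgroup_snoc_last, nestedSubgroup_snoc_of_le a y le_rfl, ← ih]
    let e : (Fin m → G) × G ≃ (Fin (m + 1) → G) :=
      (Equiv.prodComm _ _).trans (Fin.snocEquiv fun _ => G)
    refine (Nat.card_congr (Equiv.subtypeEquiv e fun p => ?_)).symm.trans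
      (Nat.card_subtype_prod_of_card_fiber fun c hc =>
        lambdaConstOrd_congr_of_inAutOrbit n _ (hc.2 m le_rfl))
    rw [← and_and_and_comm, ← forall_orderOf_snoc_iff, ← orbitEquiv_snoc_iff]
    rfl

end Count

lemma tupleType_eq_iff_mem_image_perm {G : Type*} [Group G] {m : ℕ} (b : Fin m → G)
    (r : Fin m → ℕ) :
    tupleType b = Multiset.map r Finset.univ.val ↔
      (fun i => orderOf (b i)) ∈ Finset.image (fun σ : Equiv.Perm (Fin m) => r ∘ σ) Finset.univ := by
  rw [tupleType, Multiset.map_univ_val_eq_iff_exists_perm]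
  simp

theorem card_generating_of_type_eq_sum_card {G : Type*} [Group G] [Finite G] {m : ℕ}
    (r : Fin m → ℕ) (R : Finset (Fin m → G)) (hRgen : ∀ a ∈ R, nestedSubgroup a m = ⊤)
    (hRrep : ∀ b : Fin m → G, nestedSubgroup b m = ⊤ → ∃! a, a ∈ R ∧ orbitEquiv a b) :
    Nat.card {b : Fin m → G // nestedSubgroup b m = ⊤ ∧
        tupleType b = Multiset.map r Finset.univ.val} =
      ∑ a ∈ R, ∑ s ∈ Finset.image (fun σ : Equiv.Perm (Fin m) => r ∘ σ) Finset.univ,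
        Nat.card {b : Fin m → G // (∀ i, orderOf (b i) = s i) ∧ orbitEquiv b a} := by
  classical
  have := Fintype.ofFinite G
  set I := Finset.image (fun σ : Equiv.Perm (Fin m) => r ∘ σ) Finset.univ
  let Q (p : (Fin m → G) × (Fin m → ℕ)) : Finset (Fin m → G) :=
    {b | (∀ i, orderOf (b i) = p.2 i) ∧ orbitEquiv b p.1}
  have hgen {a b : Fin m → G} (ha : a ∈ R) (hb : orbitEquiv b a) : nestedSubgroup b m = ⊤ :=
    eq_top_of_inAutOrbit_top (hRgen a ha ▸ hb m le_rfl)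
  have hunion : ({b | nestedSubgroup b m = ⊤ ∧ tupleType b = Multiset.map r Finset.univ.val} :
      Finset (Fin m → G)) = (R ×ˢ I).biUnion Q := by
    ext b
    simp only [Finset.mem_filter, Finset.mem_univ, true_and, Finset.mem_biUnion,
      Finset.mem_product, Prod.exists, tupleType_eq_iff_mem_image_perm, Q]
    constructor
    · rintro ⟨hb, hI⟩
      obtain ⟨a, ⟨ha, hab⟩, -⟩ := hRrep b hb
      exact ⟨a, _, ⟨ha, hI⟩, fun _ => rfl, orbitEquiv_comm.1 hab⟩
    · rintro ⟨a, s, ⟨ha, hs⟩, hbs, hba⟩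
      obtain rfl : (fun i => orderOf (b i)) = s := funext hbs
      exact ⟨hgen ha hba, hs⟩
  have hdisj : ((R ×ˢ I : Finset _) : Set _).PairwiseDisjoint Q := by
    rintro ⟨a, s⟩ has ⟨a', s'⟩ has' hne
    refine Finset.disjoint_left.2 fun b hb hb' => hne ?_
    simp only [Finset.mem_coe, Finset.mem_product] at has has'
    simp only [Finset.mem_filter, Finset.mem_univ, true_and, Q] at hb hb'
    have hgb := hgen has.1 hb.2
    rw [(hRrep b hgb).unique ⟨has.1, orbitEquiv_comm.1 hb.2⟩ ⟨has'.1, orbitEquiv_comm.1 hb'.2⟩,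
      show s = s' from funext fun i => (hb.1 i).symm.trans (hb'.1 i)]
  simp only [Nat.card_eq_fintype_card, Fintype.card_subtype]
  rw [hunion, Finset.card_biUnion hdisj, Finset.sum_product]

theorem card_generating_tuples_of_type_eq_sum_general {G : Type*} [Group G] [Fintype G]
    {m : ℕ} (r : Fin m → ℕ)
    (R : Finset (Fin m → G))
    (hRgen : ∀ a ∈ R, nestedSubgroup a m = ⊤)
    (hRrep : ∀ b : Fin m → G, nestedSubgroup b m = ⊤ →
      ∃! a, a ∈ R ∧ orbitEquiv a b) :
    (Nat.card {b : Fin m → G // nestedSubgroup b m = ⊤ ∧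
          tupleType b = Multiset.map r Finset.univ.val} =
        ∑ a ∈ R, ∑ s ∈ Finset.image (fun σ : Equiv.Perm (Fin m) => r ∘ σ) Finset.univ,
          ∏ i : Fin m,
            lambdaConstOrd (s i) (nestedSubgroup a (i : ℕ)) (nestedSubgroup a ((i : ℕ) + 1))) ∧
      ((Nat.card {b : Fin m → G // nestedSubgroup b m = ⊤ ∧
          tupleType b = Multiset.map r Finset.univ.val} : ℚ) / (Fintype.card G) ^ m =
        (∑ a ∈ R, ∑ s ∈ Finset.image (fun σ : Equiv.Perm (Fin m) => r ∘ σ) Finset.univ,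
          ∏ i : Fin m,
            (lambdaConstOrd (s i) (nestedSubgroup a (i : ℕ))
              (nestedSubgroup a ((i : ℕ) + 1)) : ℚ)) / (Fintype.card G) ^ m) := by
  have hcard := card_generating_of_type_eq_sum_card r R hRgen hRrep
  simp only [card_orders_orbitEquiv_eq_prod] at hcard
  exact ⟨hcard, by rw [hcard]; push_cast; rfl⟩

/-- If `R` contains exactly one representative of each orbit-equivalence class of
generating `m`-tuples, then the number of generating `m`-tuples of type `r` is
`∑_{a ∈ R} ∑_s ∏_{i<m} λ_{s i}(A_i^a, A_{i+1}^a)`, the inner sum being over all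
distinct `m`-tuples `s` whose multiset of entries equals that of `r`; consequently
`P_r(G)` equals this double sum divided by `|G|^m`. -/
theorem card_generating_tuples_of_type_eq_sum {G : Type*} [Group G] [Fintype G]
    [DecidableEq G] {m : ℕ} (r : Fin m → ℕ) (hr : ∀ i, 0 < r i)
    (R : Finset (Fin m → G))
    (hRgen : ∀ a ∈ R, nestedSubgroup a m = ⊤)
    (hRrep : ∀ b : Fin m → G, nestedSubgroup b m = ⊤ →
      ∃! a, a ∈ R ∧ orbitEquiv a b) :
    (Nat.card {b : Fin m → G // nestedSubgroup b m = ⊤ ∧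
          tupleType b = Multiset.map r Finset.univ.val} =
        ∑ a ∈ R, ∑ s ∈ Finset.image (fun σ : Equiv.Perm (Fin m) => r ∘ σ) Finset.univ,
          ∏ i : Fin m,
            lambdaConstOrd (s i) (nestedSubgroup a (i : ℕ)) (nestedSubgroup a ((i : ℕ) + 1))) ∧
      ((Nat.card {b : Fin m → G // nestedSubgroup b m = ⊤ ∧
          tupleType b = Multiset.map r Finset.univ.val} : ℚ) / (Fintype.card G) ^ m =
        (∑ a ∈ R, ∑ s ∈ Finset.image (fun σ : Equiv.Perm (Fin m) => r ∘ σ) Finset.univ,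
          ∏ i : Fin m,
            (lambdaConstOrd (s i) (nestedSubgroup a (i : ℕ))
              (nestedSubgroup a ((i : ℕ) + 1)) : ℚ)) / (Fintype.card G) ^ m) :=
  card_generating_tuples_of_type_eq_sum_general r R hRgen hRrep
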